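/- Let K be a field and let S and T be nonempty finite sets of valuation subrings of K, each of which consists of pairwise incomparable valuation subrings. If the intersection of all members of S equals the intersection of all members of T (as subrings of K), then S = T. In particular, a multi-valuation ring on K can be written in a unique way as an intersection of finitely many pairwise incomparable valuation subrings. -/

import Mathlib

/-!
If `⋂ S ⊆ V` for a valuation ring `V`, then some member of `S` is contained in `V`. Applied in
both directions, every member of `S` contains a member of `T` and conversely, and
incomparability forces `S = T`.

For the first claim, suppose no `A ∈ S` lies in `V`; by induction on `S` we find an element of
`⋂ S` outside `V`. From `a ∈ A₀ \ V` and `c ∈ ⋂ S' \ V` with `v_V a ≠ v_V c` one builds `r`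
with `v_C r ≤ min (v_C a) (v_C c)` at every ring `C` involved, with equality at `V`. It is
`r = t c` where `t` truncates `d = a / c` at `1`: `t = d / (1 + d)` works unless `1 + d` is a
nonunit at some ring where `d` is a unit, and then replacing `d` by `d (1 + d)` leaves the
truncation unchanged and makes `d` a unit at fewer rings.
-/

open Finset

theorem IsAntichain.subset_of_forall_exists_le {α : Type*} [PartialOrder α] {s t : Set α}
    (hs : IsAntichain (· ≤ ·) s) (hst : ∀ a ∈ s, ∃ b ∈ t, b ≤ a)
    (hts : ∀ b ∈ t, ∃ a ∈ s, a ≤ b) : s ⊆ t := by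
  intro a ha
  obtain ⟨b, hb, hba⟩ := hst a ha
  obtain ⟨a', ha', hab⟩ := hts b hb
  obtain rfl : a' = a := hs.eq ha' ha (hab.trans hba)
  rwa [le_antisymm hba hab] at hb

namespace Valuation

variable {Γ₀ : Type*} [LinearOrderedCommGroupWithZero Γ₀]

section Ring

variable {R : Type*} [Ring R] (v : Valuation R Γ₀)

/-- Equality is not asked for when `v a = v b`, where the leading terms of `a` and `b` may
cancel in the residue field. -/
def ApproxMin (r a b : R) : Prop :=
  v r ≤ min (v a) (v b) ∧ (v a ≠ v b → v r = min (v a) (v b))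

variable {v} {d r a b : R}

theorem ApproxMin.of_eq (h : v r = min (v a) (v b)) : v.ApproxMin r a b :=
  ⟨h.le, fun _ => h⟩

theorem ApproxMin.mul_right (h : v.ApproxMin r a b) (c : R) :
    v.ApproxMin (r * c) (a * c) (b * c) := by
  obtain ⟨hle, heq⟩ := h
  simp only [ApproxMin, map_mul, min_mul_mul_right]
  exact ⟨mul_le_mul_left hle _, fun hne => by rw [heq fun h => hne (by rw [h])]⟩

theorem map_mul_one_add_of_one_lt (h : 1 < v d) : v (d * (1 + d)) = v d * v d := by
  rw [map_mul, add_comm, v.map_add_eq_of_lt_left (by rwa [map_one])]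

theorem map_mul_one_add_of_lt_one (h : v d < 1) : v (d * (1 + d)) = v d := by
  rw [map_mul, v.map_one_add_of_lt h, mul_one]

theorem map_one_add_le_one_of_eq_one (h : v d = 1) : v (1 + d) ≤ 1 :=
  (v.map_add 1 d).trans (by rw [map_one, h, max_self])

theorem eq_one_of_map_mul_one_add_eq_one (h : v (d * (1 + d)) = 1) : v d = 1 := by
  rcases lt_trichotomy (v d) 1 with hlt | heq | hgt
  · exact absurd h (by rw [map_mul_one_add_of_lt_one hlt]; exact hlt.ne)
  · exact heq
  · exact absurd h (by rw [map_mul_one_add_of_one_lt hgt]; exact (Right.one_lt_mul' hgt hgt).ne')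

theorem ApproxMin.of_mul_one_add {t : R} (h : v.ApproxMin t (d * (1 + d)) 1) :
    v.ApproxMin t d 1 := by
  simp only [ApproxMin, map_one] at h ⊢
  rcases lt_trichotomy (v d) 1 with hlt | heq | hgt
  · rwa [map_mul_one_add_of_lt_one hlt] at h
  · rw [heq, min_self]
    exact ⟨h.1.trans (min_le_right _ _), fun hne => absurd rfl hne⟩
  · have hgt' : 1 < v (d * (1 + d)) := by
      rw [map_mul_one_add_of_one_lt hgt]
      exact Right.one_lt_mul' hgt hgt
    rw [min_eq_right hgt.le, ← min_eq_right hgt'.le]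
    exact ⟨h.1, fun _ => h.2 hgt'.ne'⟩

end Ring

theorem map_div_one_add {K : Type*} [DivisionRing K] (v : Valuation K Γ₀) {d : K}
    (h : v d = 1 → v (1 + d) = 1) : v (d / (1 + d)) = min (v d) 1 := by
  rcases lt_trichotomy (v d) 1 with hlt | heq | hgt
  · rw [map_div, v.map_one_add_of_lt hlt, div_one, min_eq_left hlt.le]
  · rw [map_div, h heq, heq, div_one, min_self]
  · rw [map_div, add_comm, v.map_add_eq_of_lt_left (by rwa [map_one]),
      div_self (zero_lt_one.trans hgt).ne', min_eq_right hgt.le]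

end Valuation

namespace ValuationSubring

variable {K : Type*} [Field K]

theorem exists_approxMin_one (F : Finset (ValuationSubring K)) (d : K) :
    ∃ t, ∀ C ∈ F, C.valuation.ApproxMin t d 1 := by
  classical
  induction h : #{C ∈ F | C.valuation d = 1} using Nat.strong_induction_on generalizing d with
  | _ n ih =>
  by_cases hbad : ∃ C ∈ F, C.valuation d = 1 ∧ C.valuation (1 + d) < 1
  · obtain ⟨C₀, hC₀, hd, hlt⟩ := hbad
    have hsub : {C ∈ F | C.valuation (d * (1 + d)) = 1} ⊂ {C ∈ F | C.valuation d = 1} := by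
      refine (ssubset_iff_of_subset fun C hC => ?_).2 ⟨C₀, by simp [hC₀, hd], ?_⟩
      · simp only [mem_filter] at hC ⊢
        exact ⟨hC.1, C.valuation.eq_one_of_map_mul_one_add_eq_one hC.2⟩
      · simp [hC₀, map_mul, hd, hlt.ne]
    obtain ⟨t, ht⟩ := ih _ (h ▸ card_lt_card hsub) (d * (1 + d)) rfl
    exact ⟨t, fun C hC => (ht C hC).of_mul_one_add⟩
  · push Not at hbad
    refine ⟨d / (1 + d), fun C hC => .of_eq ?_⟩
    rw [map_one]
    exact C.valuation.map_div_one_add fun hd =>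
      le_antisymm (C.valuation.map_one_add_le_one_of_eq_one hd) (hbad C hC hd)

theorem exists_approxMin (F : Finset (ValuationSubring K)) (a b : K) :
    ∃ r, ∀ C ∈ F, C.valuation.ApproxMin r a b := by
  rcases eq_or_ne b 0 with rfl | hb
  · exact ⟨0, fun C _ => .of_eq (by simp)⟩
  · obtain ⟨t, ht⟩ := exists_approxMin_one F (a / b)
    exact ⟨t * b, fun C hC => by simpa [div_mul_cancel₀ _ hb] using (ht C hC).mul_right b⟩

theorem one_lt_valuation_iff (A : ValuationSubring K) (x : K) : 1 < A.valuation x ↔ x ∉ A := by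
  rw [← not_le, valuation_le_one_iff]

theorem exists_forall_mem_notMem_of_forall_not_le (S : Finset (ValuationSubring K))
    {V : ValuationSubring K} (hV : V ≠ ⊤) (hSV : ∀ A ∈ S, ¬ A ≤ V) :
    ∃ r, (∀ A ∈ S, r ∈ A) ∧ r ∉ V := by
  classical
  induction S using Finset.induction_on with
  | empty =>
    obtain ⟨x, -, hx⟩ := SetLike.exists_of_lt (lt_top_iff_ne_top.2 hV)
    exact ⟨x, by simp, hx⟩
  | insert A₀ S _ ih =>
    obtain ⟨b, hbS, hbV⟩ := ih fun A hA => hSV A (mem_insert_of_mem hA)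
    obtain ⟨a, haA₀, haV⟩ := SetLike.not_le_iff_exists.1 (hSV A₀ (mem_insert_self _ _))
    obtain ⟨c, hcS, hcV, hne⟩ :
        ∃ c, (∀ A ∈ S, c ∈ A) ∧ c ∉ V ∧ V.valuation a ≠ V.valuation c := by
      by_cases hab : V.valuation a = V.valuation b
      · have hb := (one_lt_valuation_iff V b).2 hbV
        refine ⟨b * b, fun A hA => A.mul_mem _ _ (hbS A hA) (hbS A hA), ?_, ?_⟩
        · rw [← one_lt_valuation_iff, map_mul]
          exact Right.one_lt_mul' hb hb
        · rw [hab, map_mul, ne_comm, Ne, mul_eq_left₀ (zero_lt_one.trans hb).ne']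
          exact hb.ne'
      · exact ⟨b, hbS, hbV, hab⟩
    obtain ⟨r, hr⟩ := exists_approxMin (insert V (insert A₀ S)) a c
    refine ⟨r, fun A hA => ?_, ?_⟩
    · rw [← valuation_le_one_iff]
      refine (hr A (mem_insert_of_mem hA)).1.trans ?_
      rcases mem_insert.1 hA with rfl | hA
      · exact (min_le_left _ _).trans ((valuation_le_one_iff _ _).2 haA₀)
      · exact (min_le_right _ _).trans ((valuation_le_one_iff _ _).2 (hcS A hA))
    · rw [← one_lt_valuation_iff, (hr V (mem_insert_self _ _)).2 hne]
      exact lt_min ((one_lt_valuation_iff V a).2 haV) ((one_lt_valuation_iff V c).2 hcV)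

theorem exists_le_of_biInter_subset {S : Finset (ValuationSubring K)} (hS : S.Nonempty)
    {V : ValuationSubring K} (h : ⋂ A ∈ S, (A : Set K) ⊆ V) : ∃ A ∈ S, A ≤ V := by
  by_contra! hSV
  have hV : V ≠ ⊤ := by
    rintro rfl
    obtain ⟨A, hA⟩ := hS
    exact hSV A hA (le_top A)
  obtain ⟨r, hrS, hrV⟩ := exists_forall_mem_notMem_of_forall_not_le S hV hSV
  exact hrV (h (Set.mem_iInter₂.2 hrS))

end ValuationSubring

open ValuationSubring in
/-- Let `K` be a field and let `S` and `T` be nonempty finite sets of valuation subrings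
of `K`, each consisting of pairwise incomparable valuation subrings.  If the intersection
of all members of `S` equals the intersection of all members of `T` (as subsets of `K`),
then `S = T`.  (Uniqueness of the decomposition of a multi-valuation ring.) -/
theorem multiValuationRing_decomposition_unique
    {K : Type*} [Field K]
    (S T : Finset (ValuationSubring K))
    (hS : S.Nonempty) (hT : T.Nonempty)
    (hSinc : ∀ A ∈ S, ∀ B ∈ S, A ≠ B → ¬ A ≤ B)
    (hTinc : ∀ A ∈ T, ∀ B ∈ T, A ≠ B → ¬ A ≤ B)
    (h : (⋂ A ∈ S, (A : Set K)) = ⋂ A ∈ T, (A : Set K)) :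
    S = T := by
  have hTS : ∀ B ∈ T, ∃ A ∈ S, A ≤ B := fun B hB =>
    exists_le_of_biInter_subset hS (h ▸ Set.biInter_subset_of_mem hB)
  have hST : ∀ A ∈ S, ∃ B ∈ T, B ≤ A := fun A hA =>
    exists_le_of_biInter_subset hT (h ▸ Set.biInter_subset_of_mem hA)
  exact coe_injective ((IsAntichain.subset_of_forall_exists_le hSinc hST hTS).antisymm
    (IsAntichain.subset_of_forall_exists_le hTinc hTS hST))
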